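/- For every n ≥ 1 and all indices 0 ≤ i < j ≤ n, the following identities hold in the symmetric group of permutations of [n]: z_j ∘ z_i ∘ z_j^{−1} = t_0 ∘ z_{i+1}, and consequently z_j ∘ z_i = t_0 ∘ z_{i+1} ∘ z_j. -/
import Mathlib
set_option maxHeartbeats 1000000


/-- The elementary coface `d_i^{(n+1)} : [n] → [n+1]` (monotonic injection omitting `i`):
`k ↦ k` for `k < i` and `k ↦ k+1` for `k ≥ i`. -/
def dMap (n i : ℕ) : Fin (n + 1) → Fin (n + 2) :=
  fun k => if (k : ℕ) < i then ⟨k, by omega⟩ else ⟨(k : ℕ) + 1, by omega⟩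

/-- The elementary quasi-codegeneracy `u_i^{(n)} : [n+1] → [n]`:
`u_i 0 = u_i i = 0`, `u_i k = k` for `1 ≤ k ≤ i-1`, and `u_i k = k-1` for `k > i`. -/
def uMap (n i : ℕ) : Fin (n + 2) → Fin (n + 1) :=
  fun k => if (k : ℕ) = 0 ∨ (k : ℕ) = i then 0
    else if h : (k : ℕ) < i ∧ (k : ℕ) < n + 1 then ⟨k, h.2⟩
    else ⟨(k : ℕ) - 1, by omega⟩

/-- The adjacent transposition `t_i : [n] → [n]` exchanging `i` and `i+1`. -/
def tMap (n i : ℕ) : Fin (n + 1) → Fin (n + 1) :=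
  fun k => if h : (k : ℕ) = i ∧ i + 1 < n + 1 then ⟨i + 1, h.2⟩
    else if h2 : (k : ℕ) = i + 1 then ⟨i, by omega⟩
    else k

/-- The standard cyclic permutation `z_i : [n] → [n]`:
`k ↦ k+1` for `k ≤ i-1`, `i ↦ 0`, and `k ↦ k` for `k > i`. -/
def zMap (n i : ℕ) : Fin (n + 1) → Fin (n + 1) :=
  fun k => if (k : ℕ) = i then 0
    else if h : (k : ℕ) < i ∧ (k : ℕ) + 1 < n + 1 then ⟨(k : ℕ) + 1, h.2⟩
    else k

lemma zMap_coe (n i : ℕ) (hi : i ≤ n) (k : Fin (n + 1)) :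
    ((zMap n i k : ℕ)) = if (k : ℕ) = i then 0 else if (k : ℕ) < i then (k : ℕ) + 1 else (k : ℕ) := by
  simp only [zMap]
  have hk := k.isLt
  split_ifs <;> simp_all <;> omega

lemma tMap_coe (n : ℕ) (hn : 1 ≤ n) (k : Fin (n + 1)) :
    ((tMap n 0 k : ℕ)) = if (k : ℕ) = 0 then 1 else if (k : ℕ) = 1 then 0 else (k : ℕ) := by
  simp only [tMap]
  split_ifs <;> simp_all <;> omega

/-- conjugation identities among the standard cyclic permutations of `[n]`:
for `0 ≤ i < j ≤ n`, `z_j ∘ z_i ∘ z_j⁻¹ = t_0 ∘ z_{i+1}` and consequently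
`z_j ∘ z_i = t_0 ∘ z_{i+1} ∘ z_j` (where `zjinv` is any two-sided inverse of `z_j`). -/
theorem z_conj (n i j : ℕ) (hn : 1 ≤ n) (hij : i < j) (hj : j ≤ n)
    (zjinv : Fin (n + 1) → Fin (n + 1))
    (h1 : zMap n j ∘ zjinv = id) (h2 : zjinv ∘ zMap n j = id) :
    zMap n j ∘ zMap n i ∘ zjinv = tMap n 0 ∘ zMap n (i + 1) ∧
    zMap n j ∘ zMap n i = tMap n 0 ∘ zMap n (i + 1) ∘ zMap n j := by
  have key : zMap n j ∘ zMap n i = tMap n 0 ∘ zMap n (i + 1) ∘ zMap n j := by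
    funext k
    have hk := k.isLt
    apply Fin.ext
    simp only [Function.comp]
    rw [tMap_coe n hn, zMap_coe n (i+1) (by omega), zMap_coe n j hj, zMap_coe n j hj,
      zMap_coe n i (by omega)]
    split_ifs <;> first | omega | exact absurd ‹False› not_false
  refine ⟨?_, key⟩
  calc zMap n j ∘ zMap n i ∘ zjinv = (zMap n j ∘ zMap n i) ∘ zjinv := rfl
    _ = (tMap n 0 ∘ zMap n (i + 1) ∘ zMap n j) ∘ zjinv := by rw [key]
    _ = tMap n 0 ∘ zMap n (i + 1) ∘ (zMap n j ∘ zjinv) := rfl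
    _ = tMap n 0 ∘ zMap n (i + 1) := by rw [h1]; rfl
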